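/- Let G = (V,E) be a finite simple graph with no isolated vertices, and let E be partitioned into two disjoint nonempty sets B and C with B ∪ C = E (so that ∂B = ∂C). Then the domination number γ(G) equals the minimum, over all pairs of colorings c₁ : ∂B → {black, white, grey} and c₂ : ∂C → {black, white, grey} such that for every u ∈ ∂B exactly one of the following holds: c₁(u) = c₂(u) = black, or (c₁(u) = white and c₂(u) = grey), or (c₁(u) = grey and c₂(u) = white), of the quantity A_B(c₁) + A_C(c₂) − #black(∂B, c₁), where #black(∂B, c₁) is the number of vertices of ∂B colored black by c₁. -/

import Mathlib

/-- `V(S)`: the set of vertices incident to some edge of `S`. -/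
def incVerts {V : Type*} (S : Set (Sym2 V)) : Set V :=
  {v | ∃ e ∈ S, v ∈ e}

/-- The boundary `∂S` of an edge set `S ⊆ E(G)`: vertices incident both to an edge of `S`
and to an edge of `E(G) \ S`. -/
def bdry {V : Type*} (G : SimpleGraph V) (S : Set (Sym2 V)) : Set V :=
  {v | (∃ e ∈ S, v ∈ e) ∧ ∃ e ∈ G.edgeSet \ S, v ∈ e}

/-- `D` is a dominating set of `G`: every vertex not in `D` is adjacent to a vertex of `D`. -/
def IsDominating {V : Type*} (G : SimpleGraph V) (D : Set V) : Prop :=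
  ∀ v ∉ D, ∃ u ∈ D, G.Adj v u

/-- The domination number `γ(G)` (as an element of `ℕ∞`). -/
noncomputable def dominationNumber {V : Type*} (G : SimpleGraph V) : ℕ∞ :=
  sInf {n : ℕ∞ | ∃ D : Set V, IsDominating G D ∧ n = D.ncard}

/-- The three colors used in the dynamic programming. -/
inductive Color
  | black
  | white
  | grey
deriving DecidableEq

/-- `D ⊆ V(F)` is a valid partial dominating set for the edge set `F` and the coloring
`c` of the boundary `∂F`: black boundary vertices are in `D`; white boundary vertices are
not in `D` but are joined by an edge of `F` to a vertex of `D`; grey boundary vertices are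
not in `D`; every non-boundary vertex of `V(F)` is in `D` or joined by an edge of `F` to a
vertex of `D`. -/
def ValidPartial {V : Type*} (G : SimpleGraph V) (F : Set (Sym2 V)) (c : V → Color)
    (D : Set V) : Prop :=
  D ⊆ incVerts F ∧
  (∀ v ∈ bdry G F, c v = Color.black → v ∈ D) ∧
  (∀ v ∈ bdry G F, c v = Color.white → v ∉ D ∧ ∃ u ∈ D, s(v, u) ∈ F) ∧
  (∀ v ∈ bdry G F, c v = Color.grey → v ∉ D) ∧
  (∀ v ∈ incVerts F, v ∉ bdry G F → v ∈ D ∨ ∃ u ∈ D, s(v, u) ∈ F)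

/-- `A_F(c) ∈ ℕ ∪ {∞}`: the minimum cardinality of a valid partial dominating set for `F`
and `c` (`∞` if none exists). -/
noncomputable def costA {V : Type*} (G : SimpleGraph V) (F : Set (Sym2 V))
    (c : V → Color) : ℕ∞ :=
  sInf {n : ℕ∞ | ∃ D : Set V, ValidPartial G F c D ∧ n = D.ncard}

/-- The number of vertices of `X` colored black by `c`. -/
noncomputable def nblack {V : Type*} (X : Set V) (c : V → Color) : ℕ :=
  (X ∩ {v | c v = Color.black}).ncard

/-!
Gluing: if `D₁` is valid for `(B, c₁)` and `D₂` for `(C, c₂)` with compatible colourings, the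
colour constraints force `D₁ ∩ D₂` to be exactly the black boundary vertices, and every
vertex, lying in `V(B) ∪ V(C)` since none is isolated, is dominated inside `B` or inside `C`;
so `D₁ ∪ D₂` dominates `G` and has `|D₁| + |D₂| - #black` elements. Splitting: a dominating
set `D` restricts to `D ∩ V(B)` and `D ∩ V(C)`, which are valid once a boundary vertex
outside `D` is coloured white on a side through which it is dominated (`B` if possible) and
grey on the other.
-/

theorem Set.ncard_union_eq_add_sub_inter {α : Type*} [Finite α] (s t : Set α) :
    ((s ∪ t).ncard : ℕ∞) = s.ncard + t.ncard - (s ∩ t).ncard := by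
  rw [← Nat.cast_add, ← ENat.natCast_sub,
    Nat.eq_sub_of_add_eq (Set.ncard_union_add_ncard_inter s t)]

section RootRecursion

variable {V : Type*} {G : SimpleGraph V} {F B C : Set (Sym2 V)} {c c₁ c₂ : V → Color}
  {D D₁ D₂ : Set V}

theorem incVerts_union (B C : Set (Sym2 V)) :
    incVerts (B ∪ C) = incVerts B ∪ incVerts C := by
  ext v
  simp only [incVerts, Set.mem_union, Set.mem_ofPred_eq, or_and_right, exists_or]

theorem incVerts_edgeSet_eq_univ (hiso : ∀ v : V, ∃ w, G.Adj v w) :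
    incVerts G.edgeSet = Set.univ :=
  Set.eq_univ_of_forall fun v ↦
    let ⟨w, hvw⟩ := hiso v
    ⟨s(v, w), hvw, Sym2.mem_mk_left v w⟩

theorem incVerts_union_eq_univ (hiso : ∀ v : V, ∃ w, G.Adj v w) (hE : B ∪ C = G.edgeSet) :
    incVerts B ∪ incVerts C = Set.univ := by
  rw [← incVerts_union, hE, incVerts_edgeSet_eq_univ hiso]

theorem bdry_eq_inter_incVerts (hBC : Disjoint B C) (hE : B ∪ C = G.edgeSet) :
    bdry G B = incVerts B ∩ incVerts C := by
  have hdiff : G.edgeSet \ B = C := by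
    rw [← hE, Set.union_sdiff_left, hBC.symm.sdiff_eq_left]
  unfold bdry incVerts
  rw [hdiff]
  rfl

theorem bdry_comm (hBC : Disjoint B C) (hE : B ∪ C = G.edgeSet) : bdry G C = bdry G B := by
  rw [bdry_eq_inter_incVerts hBC hE,
    bdry_eq_inter_incVerts hBC.symm (Set.union_comm B C ▸ hE), Set.inter_comm]

theorem exists_validPartial_ncard_eq_costA (h : costA G F c ≠ ⊤) :
    ∃ D, ValidPartial G F c D ∧ (D.ncard : ℕ∞) = costA G F c := by
  have hne : {n : ℕ∞ | ∃ D : Set V, ValidPartial G F c D ∧ n = D.ncard}.Nonempty :=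
    Set.nonempty_iff_ne_empty.2 fun hempty ↦ h (by rw [costA, hempty, sInf_empty])
  obtain ⟨D, hD, hcost⟩ := csInf_mem hne
  exact ⟨D, hD, hcost.symm⟩

theorem costA_le_ncard (hD : ValidPartial G F c D) : costA G F c ≤ D.ncard :=
  sInf_le ⟨D, hD, rfl⟩

theorem ValidPartial.exists_adj {v : V} (hD : ValidPartial G F c D) (hF : F ⊆ G.edgeSet)
    (hv : v ∈ incVerts F) (hvD : v ∉ D) (hwhite : v ∈ bdry G F → c v = Color.white) :
    ∃ u ∈ D, G.Adj v u := by
  by_cases hb : v ∈ bdry G F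
  · obtain ⟨-, u, hu, hvu⟩ := hD.2.2.1 v hb (hwhite hb)
    exact ⟨u, hu, hF hvu⟩
  · obtain hvD' | ⟨u, hu, hvu⟩ := hD.2.2.2.2 v hv hb
    · exact absurd hvD' hvD
    · exact ⟨u, hu, hF hvu⟩

theorem IsDominating.validPartial_inter_incVerts (hD : IsDominating G D)
    (hblack : ∀ v ∈ bdry G F, c v = Color.black → v ∈ D)
    (hwhite : ∀ v ∈ bdry G F, c v = Color.white → v ∉ D ∧ ∃ u ∈ D, s(v, u) ∈ F)
    (hgrey : ∀ v ∈ bdry G F, c v = Color.grey → v ∉ D) :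
    ValidPartial G F c (D ∩ incVerts F) := by
  refine ⟨Set.inter_subset_right, fun v hv h ↦ ⟨hblack v hv h, hv.1⟩, fun v hv h ↦ ?_,
    fun v hv h hvD ↦ hgrey v hv h hvD.1, fun v hv hb ↦ ?_⟩
  · obtain ⟨hvD, u, hu, hvu⟩ := hwhite v hv h
    exact ⟨fun h' ↦ hvD h'.1, u, ⟨hu, s(v, u), hvu, Sym2.mem_mk_right v u⟩, hvu⟩
  · by_cases hvD : v ∈ D
    · exact Or.inl ⟨hvD, hv⟩
    obtain ⟨u, hu, hvu⟩ := hD v hvD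
    by_cases hF : s(v, u) ∈ F
    · exact Or.inr ⟨u, ⟨hu, s(v, u), hF, Sym2.mem_mk_right v u⟩, hF⟩
    · exact absurd ⟨hv, s(v, u), ⟨hvu, hF⟩, Sym2.mem_mk_left v u⟩ hb

def Compatible (X : Set V) (c₁ c₂ : V → Color) : Prop :=
  ∀ u ∈ X, (c₁ u = Color.black ∧ c₂ u = Color.black) ∨
    (c₁ u = Color.white ∧ c₂ u = Color.grey) ∨ (c₁ u = Color.grey ∧ c₂ u = Color.white)

theorem ValidPartial.inter_eq_bdry_inter_black (hBC : Disjoint B C) (hE : B ∪ C = G.edgeSet)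
    (hc : Compatible (bdry G B) c₁ c₂) (hD₁ : ValidPartial G B c₁ D₁)
    (hD₂ : ValidPartial G C c₂ D₂) : D₁ ∩ D₂ = bdry G B ∩ {v | c₁ v = Color.black} := by
  have hbdry := bdry_comm hBC hE
  ext v
  constructor
  · rintro ⟨hv₁, hv₂⟩
    have hvb : v ∈ bdry G B := bdry_eq_inter_incVerts hBC hE ▸ ⟨hD₁.1 hv₁, hD₂.1 hv₂⟩
    rcases hc v hvb with ⟨hb, -⟩ | ⟨-, hg⟩ | ⟨hg, -⟩
    · exact ⟨hvb, hb⟩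
    · exact absurd hv₂ (hD₂.2.2.2.1 v (hbdry ▸ hvb) hg)
    · exact absurd hv₁ (hD₁.2.2.2.1 v hvb hg)
  · rintro ⟨hvb, hb⟩
    obtain ⟨-, hb₂⟩ : c₁ v = Color.black ∧ c₂ v = Color.black := by
      rcases hc v hvb with h | ⟨h, -⟩ | ⟨h, -⟩
      · exact h
      all_goals exact absurd (hb.symm.trans h) (by decide)
    exact ⟨hD₁.2.1 v hvb hb, hD₂.2.1 v (hbdry ▸ hvb) hb₂⟩

theorem ValidPartial.isDominating_union (hiso : ∀ v : V, ∃ w, G.Adj v w)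
    (hBC : Disjoint B C) (hE : B ∪ C = G.edgeSet) (hc : Compatible (bdry G B) c₁ c₂)
    (hD₁ : ValidPartial G B c₁ D₁) (hD₂ : ValidPartial G C c₂ D₂) :
    IsDominating G (D₁ ∪ D₂) := by
  have hbdry := bdry_comm hBC hE
  intro v hv
  rw [Set.mem_union, not_or] at hv
  have via₁ (hvB : v ∈ incVerts B) (hw : v ∈ bdry G B → c₁ v = Color.white) :
      ∃ u ∈ D₁ ∪ D₂, G.Adj v u :=
    (hD₁.exists_adj (hE ▸ Set.subset_union_left) hvB hv.1 hw).imp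
      fun _ ⟨hu, hvu⟩ ↦ ⟨Or.inl hu, hvu⟩
  have via₂ (hvC : v ∈ incVerts C) (hw : v ∈ bdry G B → c₂ v = Color.white) :
      ∃ u ∈ D₁ ∪ D₂, G.Adj v u :=
    (hD₂.exists_adj (hE ▸ Set.subset_union_right) hvC hv.2 (hbdry ▸ hw)).imp
      fun _ ⟨hu, hvu⟩ ↦ ⟨Or.inr hu, hvu⟩
  by_cases hb : v ∈ bdry G B
  · rcases hc v hb with ⟨h₁, -⟩ | ⟨h₁, -⟩ | ⟨-, h₂⟩
    · exact absurd (hD₁.2.1 v hb h₁) hv.1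
    · exact via₁ hb.1 fun _ ↦ h₁
    · exact via₂ (hbdry ▸ hb : v ∈ bdry G C).1 fun _ ↦ h₂
  · have hcover : v ∈ incVerts B ∪ incVerts C := incVerts_union_eq_univ hiso hE ▸ trivial
    rcases hcover with hvB | hvC
    · exact via₁ hvB (absurd · hb)
    · exact via₂ hvC (absurd · hb)

theorem dominationNumber_le_costA_add_costA_sub [Finite V]
    (hiso : ∀ v : V, ∃ w, G.Adj v w) (hBC : Disjoint B C) (hE : B ∪ C = G.edgeSet)
    (hc : Compatible (bdry G B) c₁ c₂) :
    dominationNumber G ≤ costA G B c₁ + costA G C c₂ - (nblack (bdry G B) c₁ : ℕ∞) := by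
  by_cases h₁ : costA G B c₁ = ⊤
  · simp [h₁]
  by_cases h₂ : costA G C c₂ = ⊤
  · simp [h₂]
  obtain ⟨D₁, hD₁, hcost₁⟩ := exists_validPartial_ncard_eq_costA h₁
  obtain ⟨D₂, hD₂, hcost₂⟩ := exists_validPartial_ncard_eq_costA h₂
  rw [← hcost₁, ← hcost₂, nblack, ← hD₁.inter_eq_bdry_inter_black hBC hE hc hD₂,
    ← Set.ncard_union_eq_add_sub_inter]
  exact sInf_le ⟨_, hD₁.isDominating_union hiso hBC hE hc hD₂, rfl⟩

open Classical in
noncomputable def boundaryColoring (D : Set V) (B : Set (Sym2 V))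
    (viaB otherwise : Color) : V → Color :=
  fun u ↦ if u ∈ D then Color.black else if ∃ w ∈ D, s(u, w) ∈ B then viaB else otherwise

theorem boundaryColoring_eq_black_iff {a b : Color} (ha : a ≠ Color.black)
    (hb : b ≠ Color.black) (u : V) : boundaryColoring D B a b u = Color.black ↔ u ∈ D := by
  unfold boundaryColoring
  split_ifs <;> simp_all

theorem compatible_boundaryColoring (X : Set V) :
    Compatible X (boundaryColoring D B Color.white Color.grey)
      (boundaryColoring D B Color.grey Color.white) := by
  intro u _
  unfold boundaryColoring
  split_ifs <;> simp

theorem IsDominating.validPartial_boundaryColoring_left (hD : IsDominating G D) :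
    ValidPartial G B (boundaryColoring D B Color.white Color.grey) (D ∩ incVerts B) := by
  refine hD.validPartial_inter_incVerts ?_ ?_ ?_ <;> intro v _ h <;>
    unfold boundaryColoring at h <;> split_ifs at h <;> simp_all

theorem IsDominating.validPartial_boundaryColoring_right (hD : IsDominating G D)
    (hE : B ∪ C = G.edgeSet) :
    ValidPartial G C (boundaryColoring D B Color.grey Color.white) (D ∩ incVerts C) := by
  refine hD.validPartial_inter_incVerts ?_ ?_ ?_ <;> intro v _ h <;>
    unfold boundaryColoring at h <;> split_ifs at h with hvD hvB <;> simp_all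
  obtain ⟨u, hu, hvu⟩ := hD v hvD
  have huv : s(v, u) ∈ B ∪ C := hE ▸ hvu
  exact ⟨u, hu, huv.resolve_left (hvB u hu)⟩

theorem IsDominating.exists_compatible_costA_add_costA_sub_le [Finite V]
    (hiso : ∀ v : V, ∃ w, G.Adj v w) (hBC : Disjoint B C) (hE : B ∪ C = G.edgeSet)
    (hD : IsDominating G D) :
    ∃ c₁ c₂ : V → Color, Compatible (bdry G B) c₁ c₂ ∧
      costA G B c₁ + costA G C c₂ - (nblack (bdry G B) c₁ : ℕ∞) ≤ D.ncard := by
  let c₁ := boundaryColoring D B Color.white Color.grey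
  refine ⟨c₁, _, compatible_boundaryColoring _, ?_⟩
  have hblack :
      bdry G B ∩ {v | c₁ v = Color.black} = D ∩ incVerts B ∩ (D ∩ incVerts C) := by
    ext v
    simp only [Set.mem_inter_iff, Set.mem_ofPred_eq, bdry_eq_inter_incVerts hBC hE, c₁,
      boundaryColoring_eq_black_iff (a := Color.white) (b := Color.grey) nofun nofun]
    tauto
  have hunion : D ∩ incVerts B ∪ D ∩ incVerts C = D := by
    rw [← Set.inter_union_distrib_left, incVerts_union_eq_univ hiso hE, Set.inter_univ]
  calc costA G B c₁ + costA G C _ - (nblack (bdry G B) c₁ : ℕ∞)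
      ≤ (D ∩ incVerts B).ncard + (D ∩ incVerts C).ncard - (nblack (bdry G B) c₁ : ℕ∞) :=
        tsub_le_tsub_right (add_le_add (costA_le_ncard hD.validPartial_boundaryColoring_left)
          (costA_le_ncard (hD.validPartial_boundaryColoring_right hE))) _
    _ = D.ncard := by rw [nblack, hblack, ← Set.ncard_union_eq_add_sub_inter, hunion]

end RootRecursion

theorem dominationNumber_eq_root_recursion_general {V : Type*} [Fintype V]
    (G : SimpleGraph V) (hiso : ∀ v : V, ∃ w, G.Adj v w)
    (B C : Set (Sym2 V)) (hBC : Disjoint B C)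
    (hE : B ∪ C = G.edgeSet) :
    dominationNumber G =
      sInf {n : ℕ∞ | ∃ c₁ c₂ : V → Color,
        (∀ u ∈ bdry G B,
          (c₁ u = Color.black ∧ c₂ u = Color.black) ∨
          (c₁ u = Color.white ∧ c₂ u = Color.grey) ∨
          (c₁ u = Color.grey ∧ c₂ u = Color.white)) ∧
        n = costA G B c₁ + costA G C c₂ - (nblack (bdry G B) c₁ : ℕ∞)} := by
  apply le_antisymm
  · exact le_sInf fun n ⟨c₁, c₂, hc, hn⟩ ↦
      hn ▸ dominationNumber_le_costA_add_costA_sub hiso hBC hE hc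
  · refine le_sInf fun m ⟨D, hD, hm⟩ ↦ ?_
    obtain ⟨c₁, c₂, hc, hle⟩ := hD.exists_compatible_costA_add_costA_sub_le hiso hBC hE
    exact hm ▸ sInf_le_of_le ⟨c₁, c₂, hc, rfl⟩ hle

/-- for a finite simple graph with no isolated vertices whose edge set is
partitioned into disjoint nonempty parts `B` and `C` (so that `∂B = ∂C`), the domination
number equals the minimum of `A_B(c₁) + A_C(c₂) - #black(∂B, c₁)` over all pairs of
colorings `(c₁, c₂)` such that on each `u ∈ ∂B` exactly one of the following holds:
both colorings are black at `u`, or `c₁` is white and `c₂` grey at `u`, or `c₁` is grey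
and `c₂` white at `u`. -/
theorem dominationNumber_eq_root_recursion {V : Type*} [Fintype V] [DecidableEq V]
    (G : SimpleGraph V) (hiso : ∀ v : V, ∃ w, G.Adj v w)
    (B C : Set (Sym2 V)) (hBC : Disjoint B C) (hBne : B.Nonempty) (hCne : C.Nonempty)
    (hE : B ∪ C = G.edgeSet) :
    dominationNumber G =
      sInf {n : ℕ∞ | ∃ c₁ c₂ : V → Color,
        (∀ u ∈ bdry G B,
          (c₁ u = Color.black ∧ c₂ u = Color.black) ∨
          (c₁ u = Color.white ∧ c₂ u = Color.grey) ∨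
          (c₁ u = Color.grey ∧ c₂ u = Color.white)) ∧
        n = costA G B c₁ + costA G C c₂ - (nblack (bdry G B) c₁ : ℕ∞)} :=
  dominationNumber_eq_root_recursion_general G hiso B C hBC hE
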